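/- Let λ > 0, let P be an n×n real symmetric matrix with 0 ⪯ P ≺ λI, let Q be an n×n symmetric positive semidefinite matrix, R an m×m symmetric positive definite matrix, A ∈ ℝ^{n×n}, B ∈ ℝ^{n×m}, and r, ŵ, x̄ ∈ ℝⁿ. Set Φ := B R⁻¹ Bᵀ − λ⁻¹ I, K := −R⁻¹ Bᵀ (I + PΦ)⁻¹ P A, L := −R⁻¹ Bᵀ (I + PΦ)⁻¹ (P ŵ + r), u* := K x̄ + L, H := (λI − P)⁻¹ P (A + B K), G := (λI − P)⁻¹ (P B L + r + λ ŵ), w* := H x̄ + G, and define f(u, w) := x̄ᵀ Q x̄ + uᵀ R u + (A x̄ + B u + w)ᵀ P (A x̄ + B u + w) + 2 rᵀ (A x̄ + B u + w) − λ ‖w − ŵ‖₂². Then (u*, w*) is a saddle point of f; that is, f(u*, w) ≤ f(u*, w*) ≤ f(u, w*) for all u ∈ ℝ^m and all w ∈ ℝⁿ. -/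

import Mathlib

open Matrix

section aux

variable {n m : ℕ}

private lemma psd_dot_nonneg {P : Matrix (Fin n) (Fin n) ℝ} (hP : P.PosSemidef)
    (x : Fin n → ℝ) : 0 ≤ x ⬝ᵥ (P *ᵥ x) := by
  have h := hP.dotProduct_mulVec_nonneg x
  rwa [star_trivial] at h

private lemma symm_of_psd {P : Matrix (Fin n) (Fin n) ℝ} (hP : P.PosSemidef) : Pᵀ = P := by
  have := hP.isHermitian
  rwa [Matrix.IsHermitian, conjTranspose_eq_transpose_of_trivial] at this

private lemma dot_symm (P : Matrix (Fin n) (Fin n) ℝ) (hP : Pᵀ = P) (a d : Fin n → ℝ) :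
    a ⬝ᵥ (P *ᵥ d) = d ⬝ᵥ (P *ᵥ a) := by
  rw [dotProduct_mulVec, ← mulVec_transpose, hP, dotProduct_comm]

private lemma expand_quad (P : Matrix (Fin n) (Fin n) ℝ) (hP : Pᵀ = P) (a d : Fin n → ℝ) :
    (a + d) ⬝ᵥ (P *ᵥ (a + d))
      = a ⬝ᵥ (P *ᵥ a) + 2 * (d ⬝ᵥ (P *ᵥ a)) + d ⬝ᵥ (P *ᵥ d) := by
  rw [mulVec_add, dotProduct_add, add_dotProduct, add_dotProduct, dot_symm P hP a d]
  ring

private lemma posDef_smul {M : Matrix (Fin n) (Fin n) ℝ} (hM : M.PosDef) {c : ℝ}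
    (hc : 0 < c) : (c • M).PosDef := by
  refine .of_dotProduct_mulVec_pos ?_ fun x hx => ?_
  · have h1 := hM.isHermitian
    rw [Matrix.IsHermitian] at h1 ⊢
    rw [conjTranspose_smul, h1, star_trivial]
  · rw [smul_mulVec, dotProduct_smul]
    exact smul_pos hc (hM.dotProduct_mulVec_pos hx)

private lemma expand_dot (e d : Fin n → ℝ) :
    (e + d) ⬝ᵥ (e + d) = e ⬝ᵥ e + 2 * (d ⬝ᵥ e) + d ⬝ᵥ d := by
  rw [dotProduct_add, add_dotProduct, add_dotProduct, dotProduct_comm e d]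
  ring

end aux

set_option maxHeartbeats 1000000
/-- `(u*, w*)` given by the gains of Theorem 1 is a saddle point of the
per-stage cost of the penalized distributionally robust Bellman recursion. -/
theorem saddle_point_per_stage {n m : ℕ} (lam : ℝ) (hlam : 0 < lam)
    (P : Matrix (Fin n) (Fin n) ℝ) (hP : P.PosSemidef)
    (hPlam : (lam • (1 : Matrix (Fin n) (Fin n) ℝ) - P).PosDef)
    (Q : Matrix (Fin n) (Fin n) ℝ) (hQ : Q.PosSemidef)
    (R : Matrix (Fin m) (Fin m) ℝ) (hR : R.PosDef)
    (A : Matrix (Fin n) (Fin n) ℝ) (B : Matrix (Fin n) (Fin m) ℝ)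
    (r what xbar : Fin n → ℝ) :
    let Φ : Matrix (Fin n) (Fin n) ℝ :=
      B * R⁻¹ * Bᵀ - lam⁻¹ • (1 : Matrix (Fin n) (Fin n) ℝ)
    let K : Matrix (Fin m) (Fin n) ℝ :=
      -(R⁻¹ * Bᵀ * ((1 : Matrix (Fin n) (Fin n) ℝ) + P * Φ)⁻¹ * P * A)
    let L : Fin m → ℝ :=
      -((R⁻¹ * Bᵀ * ((1 : Matrix (Fin n) (Fin n) ℝ) + P * Φ)⁻¹) *ᵥ (P *ᵥ what + r))
    let ustar : Fin m → ℝ := K *ᵥ xbar + L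
    let H : Matrix (Fin n) (Fin n) ℝ :=
      (lam • (1 : Matrix (Fin n) (Fin n) ℝ) - P)⁻¹ * P * (A + B * K)
    let G : Fin n → ℝ :=
      (lam • (1 : Matrix (Fin n) (Fin n) ℝ) - P)⁻¹ *ᵥ ((P * B) *ᵥ L + r + lam • what)
    let wstar : Fin n → ℝ := H *ᵥ xbar + G
    let f : (Fin m → ℝ) → (Fin n → ℝ) → ℝ := fun u w =>
      xbar ⬝ᵥ (Q *ᵥ xbar) + u ⬝ᵥ (R *ᵥ u)
        + (A *ᵥ xbar + B *ᵥ u + w) ⬝ᵥ (P *ᵥ (A *ᵥ xbar + B *ᵥ u + w))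
        + 2 * (r ⬝ᵥ (A *ᵥ xbar + B *ᵥ u + w))
        - lam * ((w - what) ⬝ᵥ (w - what))
    ∀ (u : Fin m → ℝ) (w : Fin n → ℝ),
      f ustar w ≤ f ustar wstar ∧ f ustar wstar ≤ f u wstar := by
  intro Φ K L ustar H G wstar f u w
  set D : Matrix (Fin n) (Fin n) ℝ := lam • (1 : Matrix (Fin n) (Fin n) ℝ) - P with hD
  set M : Matrix (Fin n) (Fin n) ℝ := (1 : Matrix (Fin n) (Fin n) ℝ) + P * Φ with hM
  -- basic invertibility facts
  have hDdet : IsUnit D.det := hPlam.det_pos.ne'.isUnit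
  have hDDinv : D * D⁻¹ = 1 := mul_nonsing_inv _ hDdet
  have hDinvD : D⁻¹ * D = 1 := nonsing_inv_mul _ hDdet
  have hRdet : IsUnit R.det := hR.det_pos.ne'.isUnit
  have hRRinv : R * R⁻¹ = 1 := mul_nonsing_inv _ hRdet
  have hPt : Pᵀ = P := symm_of_psd hP
  -- invertibility of M
  have hBRB : (B * R⁻¹ * Bᵀ).PosSemidef := by
    have h1 := hR.inv.posSemidef.mul_mul_conjTranspose_same B
    rwa [conjTranspose_eq_transpose_of_trivial] at h1
  have hMdet : IsUnit M.det := by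
    obtain ⟨S, hSsa, -, hSS⟩ : ∃ S : Matrix (Fin n) (Fin n) ℝ, IsSelfAdjoint S ∧
        QuasispectrumRestricts S ContinuousMap.realToNNReal ∧ S * S = P := by
      open scoped MatrixOrder in
      exact CFC.exists_sqrt_of_isSelfAdjoint_of_quasispectrumRestricts hP.isHermitian
        (QuasispectrumRestricts.nnreal_of_nonneg hP.nonneg)
    have hSt : Sᵀ = S := by
      have h0 := hSsa.star_eq
      rwa [star_eq_conjTranspose, conjTranspose_eq_transpose_of_trivial] at h0
    have hdet : M.det = ((1 : Matrix (Fin n) (Fin n) ℝ) + S * Φ * S).det := by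
      rw [hM, ← hSS, Matrix.mul_assoc, det_one_add_mul_comm, Matrix.mul_assoc]
    have hposd : ((1 : Matrix (Fin n) (Fin n) ℝ) + S * Φ * S).PosDef := by
      have heq : (1 : Matrix (Fin n) (Fin n) ℝ) + S * Φ * S
          = lam⁻¹ • D + S * (B * R⁻¹ * Bᵀ) * S := by
        have h1 : S * Φ * S = S * (B * R⁻¹ * Bᵀ) * S - lam⁻¹ • P := by
          rw [show Φ = B * R⁻¹ * Bᵀ - lam⁻¹ • (1 : Matrix (Fin n) (Fin n) ℝ) from rfl]
          rw [Matrix.mul_sub, Matrix.sub_mul, Matrix.mul_smul, Matrix.mul_one,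
            Matrix.smul_mul, hSS]
        have h2 : lam⁻¹ • D = 1 - lam⁻¹ • P := by
          rw [hD, smul_sub, smul_smul, inv_mul_cancel₀ hlam.ne', one_smul]
        rw [h1, h2]
        abel
      rw [heq]
      exact (posDef_smul hPlam (inv_pos.mpr hlam)).add_posSemidef
        (by have h3 := hBRB.mul_mul_conjTranspose_same S
            rwa [conjTranspose_eq_transpose_of_trivial, hSt] at h3)
    rw [hdet]
    exact hposd.det_pos.ne'.isUnit
  have hMMinv : M * M⁻¹ = 1 := mul_nonsing_inv _ hMdet
  -- the vector z and c
  set z : Fin n → ℝ := A *ᵥ xbar + B *ᵥ ustar with hz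
  set c : Fin n → ℝ := P *ᵥ (A *ᵥ xbar) + P *ᵥ what + r with hc
  -- stationarity in w
  have hw : D *ᵥ wstar = P *ᵥ z + r + lam • what := by
    show D *ᵥ (H *ᵥ xbar + G) = _
    have h1 : D * H = P * (A + B * K) := by
      show D * (D⁻¹ * P * (A + B * K)) = _
      rw [← Matrix.mul_assoc, ← Matrix.mul_assoc, hDDinv, Matrix.one_mul]
    have h2 : D *ᵥ G = (P * B) *ᵥ L + r + lam • what := by
      show D *ᵥ (D⁻¹ *ᵥ _) = _
      rw [mulVec_mulVec, hDDinv, one_mulVec]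
    rw [mulVec_add, mulVec_mulVec, h1, h2, hz]
    show (P * (A + B * K)) *ᵥ xbar + ((P * B) *ᵥ L + r + lam • what)
        = P *ᵥ (A *ᵥ xbar + B *ᵥ (K *ᵥ xbar + L)) + r + lam • what
    simp only [Matrix.mul_add, Matrix.add_mulVec, mulVec_add, mulVec_mulVec,
      Matrix.mul_assoc]
    abel
  -- ustar in terms of c
  have hust : ustar = -((R⁻¹ * Bᵀ * M⁻¹) *ᵥ c) := by
    show K *ᵥ xbar + L = _
    rw [show K = -(R⁻¹ * Bᵀ * M⁻¹ * P * A) from rfl,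
      show L = -((R⁻¹ * Bᵀ * M⁻¹) *ᵥ (P *ᵥ what + r)) from rfl]
    rw [hc]
    simp only [neg_mulVec, mulVec_add, mulVec_mulVec, Matrix.mul_assoc, neg_add_rev]
    abel
  -- stationarity in u
  have hu : R *ᵥ ustar + Bᵀ *ᵥ (P *ᵥ (z + wstar)) + Bᵀ *ᵥ r = 0 := by
    have hRu : R *ᵥ ustar = -((Bᵀ * M⁻¹) *ᵥ c) := by
      rw [hust, mulVec_neg, mulVec_mulVec, ← Matrix.mul_assoc, ← Matrix.mul_assoc,
        hRRinv, Matrix.one_mul]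
    have hDP : D⁻¹ * P = lam • D⁻¹ - 1 := by
      have : P = lam • (1 : Matrix (Fin n) (Fin n) ℝ) - D := by rw [hD]; abel
      rw [this, Matrix.mul_sub, Matrix.mul_smul, Matrix.mul_one, hDinvD]
    have hPD : P * D⁻¹ = lam • D⁻¹ - 1 := by
      have : P = lam • (1 : Matrix (Fin n) (Fin n) ℝ) - D := by rw [hD]; abel
      rw [this, Matrix.sub_mul, Matrix.smul_mul, Matrix.one_mul, hDDinv]
    have hzw : z + wstar = D⁻¹ *ᵥ (lam • z + r + lam • what) := by
      have h3 : D *ᵥ z + P *ᵥ z = lam • z := by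
        rw [hD, sub_mulVec, smul_mulVec, one_mulVec]
        abel
      have hDzw : D *ᵥ (z + wstar) = lam • z + r + lam • what := by
        rw [mulVec_add, hw,
          show D *ᵥ z + (P *ᵥ z + r + lam • what)
              = (D *ᵥ z + P *ᵥ z) + r + lam • what from by abel, h3]
      rw [← hDzw, mulVec_mulVec, hDinvD, one_mulVec]
    have hPzw : P *ᵥ (z + wstar) + r
        = lam • (D⁻¹ *ᵥ (c + (P * B) *ᵥ ustar)) := by
      rw [hzw, mulVec_mulVec, hPD]
      have hcz : c + (P * B) *ᵥ ustar = P *ᵥ z + P *ᵥ what + r := by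
        have hPz : P *ᵥ z = P *ᵥ (A *ᵥ xbar) + (P * B) *ᵥ ustar := by
          rw [hz, mulVec_add]
          simp only [mulVec_mulVec]
        rw [hPz, hc]
        abel
      rw [hcz]
      have e1 : D⁻¹ *ᵥ (P *ᵥ z + P *ᵥ what + r)
          = (lam • (D⁻¹ *ᵥ z) - z) + (lam • (D⁻¹ *ᵥ what) - what) + D⁻¹ *ᵥ r := by
        rw [mulVec_add, mulVec_add, mulVec_mulVec, mulVec_mulVec, hDP, sub_mulVec,
          sub_mulVec, smul_mulVec, smul_mulVec, one_mulVec, one_mulVec]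
      rw [e1, sub_mulVec, smul_mulVec, one_mulVec]
      simp only [mulVec_add, mulVec_smul, smul_add, smul_sub]
      abel
    have hY : lam • ((1 : Matrix (Fin n) (Fin n) ℝ) - P * B * R⁻¹ * Bᵀ * M⁻¹)
        = D * M⁻¹ := by
      have e1 : (1 : Matrix (Fin n) (Fin n) ℝ) - P * B * R⁻¹ * Bᵀ * M⁻¹
          = (M - P * B * R⁻¹ * Bᵀ) * M⁻¹ := by
        rw [Matrix.sub_mul, hMMinv]
      have e2 : lam • (M - P * B * R⁻¹ * Bᵀ) = D := by
        rw [hM, show Φ = B * R⁻¹ * Bᵀ - lam⁻¹ • (1 : Matrix (Fin n) (Fin n) ℝ) from rfl]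
        rw [Matrix.mul_sub, Matrix.mul_smul, Matrix.mul_one, hD]
        rw [show (1 : Matrix (Fin n) (Fin n) ℝ) + (P * (B * R⁻¹ * Bᵀ) - lam⁻¹ • P)
              - P * B * R⁻¹ * Bᵀ = 1 - lam⁻¹ • P by
          simp only [Matrix.mul_assoc]; abel]
        rw [smul_sub, smul_smul, mul_inv_cancel₀ hlam.ne', one_smul]
      rw [e1, ← e2, Matrix.smul_mul]
    have hcu : c + (P * B) *ᵥ ustar
        = ((1 : Matrix (Fin n) (Fin n) ℝ) - P * B * R⁻¹ * Bᵀ * M⁻¹) *ᵥ c := by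
      rw [hust, mulVec_neg, mulVec_mulVec, sub_mulVec, one_mulVec]
      rw [show P * B * (R⁻¹ * Bᵀ * M⁻¹) = P * B * R⁻¹ * Bᵀ * M⁻¹ by
        simp only [Matrix.mul_assoc]]
      abel
    have hfin : Bᵀ *ᵥ (P *ᵥ (z + wstar)) + Bᵀ *ᵥ r = (Bᵀ * M⁻¹) *ᵥ c := by
      rw [← mulVec_add, hPzw, hcu, mulVec_mulVec, ← smul_mulVec,
        ← Matrix.mul_smul, hY, ← Matrix.mul_assoc, hDinvD, Matrix.one_mul,
        mulVec_mulVec]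
    rw [add_assoc, hfin, hRu]
    abel
  have hRt : Rᵀ = R := symm_of_psd hR.posSemidef
  -- first inequality: f ustar w ≤ f ustar wstar
  constructor
  · set d : Fin n → ℝ := w - wstar with hd
    have hg : P *ᵥ (z + wstar) + r - lam • (wstar - what) = 0 := by
      have hPw : P *ᵥ wstar = lam • wstar - (P *ᵥ z + r + lam • what) := by
        rw [← hw, hD, sub_mulVec, smul_mulVec, one_mulVec]
        abel
      rw [mulVec_add, hPw, smul_sub]
      abel
    have hg0 : d ⬝ᵥ (P *ᵥ (z + wstar)) + d ⬝ᵥ r - lam * (d ⬝ᵥ (wstar - what)) = 0 := by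
      have h := congrArg (fun v => d ⬝ᵥ v) hg
      simpa only [dotProduct_add, dotProduct_sub, dotProduct_smul, smul_eq_mul,
        dotProduct_zero] using h
    have hDd : d ⬝ᵥ (D *ᵥ d) = lam * (d ⬝ᵥ d) - d ⬝ᵥ (P *ᵥ d) := by
      rw [hD, sub_mulVec, smul_mulVec, one_mulVec, dotProduct_sub,
        dotProduct_smul, smul_eq_mul]
    have key : f ustar wstar - f ustar w = d ⬝ᵥ (D *ᵥ d) := by
      unfold f
      beta_reduce
      rw [← hz]
      rw [show z + w = z + wstar + d from by rw [hd]; abel]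
      rw [show w - what = wstar - what + d from by rw [hd]; abel]
      rw [expand_quad P hPt (z + wstar) d, expand_dot (wstar - what) d, hDd]
      simp only [dotProduct_add]
      linarith [hg0, dotProduct_comm r d]
    have hnn : 0 ≤ d ⬝ᵥ (D *ᵥ d) := psd_dot_nonneg hPlam.posSemidef d
    linarith [key, hnn]
  -- second inequality: f ustar wstar ≤ f u wstar
  · set e : Fin m → ℝ := u - ustar with he
    have hBt : ∀ v : Fin n → ℝ, e ⬝ᵥ (Bᵀ *ᵥ v) = (B *ᵥ e) ⬝ᵥ v := by
      intro v
      rw [dotProduct_mulVec, vecMul_transpose]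
    have hu0 : e ⬝ᵥ (R *ᵥ ustar) + ((B *ᵥ e) ⬝ᵥ (P *ᵥ (z + wstar))
        + (B *ᵥ e) ⬝ᵥ r) = 0 := by
      have h := congrArg (fun v => e ⬝ᵥ v) hu
      simpa only [dotProduct_add, hBt, dotProduct_zero, add_assoc] using h
    have key : f u wstar - f ustar wstar
        = e ⬝ᵥ (R *ᵥ e) + (B *ᵥ e) ⬝ᵥ (P *ᵥ (B *ᵥ e)) := by
      unfold f
      beta_reduce
      rw [show u = ustar + e from by rw [he]; abel]
      rw [show B *ᵥ (ustar + e) = B *ᵥ ustar + B *ᵥ e from mulVec_add _ _ _]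
      rw [show A *ᵥ xbar + (B *ᵥ ustar + B *ᵥ e) + wstar = (z + wstar) + B *ᵥ e
        from by rw [hz]; abel]
      rw [show A *ᵥ xbar + B *ᵥ ustar + wstar = z + wstar from by rw [hz]]
      rw [expand_quad P hPt (z + wstar) (B *ᵥ e), expand_quad R hRt ustar e]
      simp only [dotProduct_add]
      linarith [hu0, dotProduct_comm r (B *ᵥ e)]
    have hnn1 : 0 ≤ e ⬝ᵥ (R *ᵥ e) := psd_dot_nonneg hR.posSemidef e
    have hnn2 : 0 ≤ (B *ᵥ e) ⬝ᵥ (P *ᵥ (B *ᵥ e)) := psd_dot_nonneg hP (B *ᵥ e)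
    linarith [key, hnn1, hnn2]
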